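/- arXiv:2507.05642 — 2 statements merged into one kernel-verified Lean document; each statement's English description precedes it below -/
import Mathlib

section
/- If U is an m×n row-quantum Latin rectangle in ℋ_n with cardinality c₁ and V is an n×m row-quantum Latin rectangle in ℋ_m with cardinality c₂, then the QLS(mn) W defined by w_{i,j;k,l} = u_{i,j+k} ⊗ v_{j,i+l} (indices mod n and mod m respectively) has cardinality c₁·c₂. -/
noncomputable section

/-- Two vectors are identified when they differ by a global phase `e^{iθ}`. -/
def PhaseEq {E : Type*} [AddCommGroup E] [Module ℂ E] (u v : E) : Prop :=
  ∃ θ : ℝ, u = Complex.exp (θ * Complex.I) • v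

/-- Concrete tensor product `u ⊗ v` of Euclidean space vectors. -/
def tens {ι κ : Type*} (u : EuclideanSpace ℂ ι) (v : EuclideanSpace ℂ κ) :
    EuclideanSpace ℂ (ι × κ) :=
  (WithLp.equiv 2 _).symm (fun p : ι × κ => u p.1 * v p.2)

/-- An array (with arbitrary finite index types) all of whose rows and columns
are orthonormal families. -/
def IsQLSIdx {ι κ E : Type*} [NormedAddCommGroup E] [InnerProductSpace ℂ E]
    (M : ι → κ → E) : Prop :=
  (∀ i, Orthonormal ℂ (fun j => M i j)) ∧ (∀ j, Orthonormal ℂ (fun i => M i j))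

/-- The family `f` has exactly `c` distinct members up to global phase. -/
def FamCardEq {ι E : Type*} [AddCommGroup E] [Module ℂ E] (f : ι → E) (c : ℕ) : Prop :=
  ∃ reps : Fin c → E,
    (∀ i, ∃ k, PhaseEq (f i) (reps k)) ∧
    (∀ k, ∃ i, PhaseEq (f i) (reps k)) ∧
    (∀ k l, k ≠ l → ¬ PhaseEq (reps k) (reps l))

/-! A product `u ⊗ v` determines its factors up to scalars, and for unit vectors those scalars
are phases. Hence the phase classes of products of unit vectors are exactly the pairs of phase
classes of the factors, so all products `u_{i,a} ⊗ v_{j,b}` form `c₁ · c₂` classes. The entries of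
`W` are exactly these products, as `(i, j, k, l) ↦ ((i, j + k), (j, i + l))` is onto. -/

section PhaseEq

variable {E : Type*}

theorem PhaseEq.norm_eq [NormedAddCommGroup E] [NormedSpace ℂ E] {u v : E}
    (h : PhaseEq u v) : ‖u‖ = ‖v‖ := by
  obtain ⟨θ, rfl⟩ := h
  simp [norm_smul, Complex.norm_exp_ofReal_mul_I]

theorem phaseEq_of_eq_smul [AddCommGroup E] [Module ℂ E] {u v : E} {c : ℂ}
    (hc : ‖c‖ = 1) (h : u = c • v) : PhaseEq u v := by
  refine ⟨c.arg, h.trans ?_⟩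
  simpa [hc] using congrArg (· • v) (Complex.norm_mul_exp_arg_mul_I c).symm

theorem phaseEq_of_eq_smul_of_norm_eq [NormedAddCommGroup E] [NormedSpace ℂ E] {u v : E} {c : ℂ}
    (huv : ‖u‖ = ‖v‖) (hv : v ≠ 0) (h : u = c • v) : PhaseEq u v := by
  refine phaseEq_of_eq_smul ?_ h
  rw [h, norm_smul] at huv
  exact (mul_eq_right₀ (norm_ne_zero_iff.mpr hv)).mp huv

end PhaseEq

section Tens

variable {ι κ : Type*}

theorem tens_smul_left (c : ℂ) (u : EuclideanSpace ℂ ι) (v : EuclideanSpace ℂ κ) :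
    tens (c • u) v = c • tens u v :=
  PiLp.ext fun p => mul_assoc c (u p.1) (v p.2)

theorem tens_smul_right (c : ℂ) (u : EuclideanSpace ℂ ι) (v : EuclideanSpace ℂ κ) :
    tens u (c • v) = c • tens u v :=
  PiLp.ext fun p => mul_left_comm (u p.1) c (v p.2)

theorem phaseEq_tens {u u' : EuclideanSpace ℂ ι} {v v' : EuclideanSpace ℂ κ}
    (hu : PhaseEq u u') (hv : PhaseEq v v') : PhaseEq (tens u v) (tens u' v') := by
  obtain ⟨θ, rfl⟩ := hu
  obtain ⟨φ, rfl⟩ := hv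
  refine ⟨θ + φ, ?_⟩
  rw [tens_smul_left, tens_smul_right, smul_smul, ← Complex.exp_add]
  push_cast
  ring_nf

theorem exists_eq_smul_left_of_tens_eq {u u' : EuclideanSpace ℂ ι} {v v' : EuclideanSpace ℂ κ}
    (h : tens u v = tens u' v') (hv : v ≠ 0) : ∃ c : ℂ, u = c • u' := by
  obtain ⟨b, hb⟩ : ∃ b, v b ≠ 0 := by
    by_contra! h0
    exact hv (PiLp.ext h0)
  refine ⟨v' b / v b, PiLp.ext fun a => ?_⟩
  have hab : u a * v b = u' a * v' b := congrArg (· (a, b)) h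
  simp only [PiLp.smul_apply, smul_eq_mul]
  field_simp
  linear_combination hab

theorem exists_eq_smul_right_of_tens_eq {u u' : EuclideanSpace ℂ ι} {v v' : EuclideanSpace ℂ κ}
    (h : tens u v = tens u' v') (hu : u ≠ 0) : ∃ c : ℂ, v = c • v' := by
  obtain ⟨a, ha⟩ : ∃ a, u a ≠ 0 := by
    by_contra! h0
    exact hu (PiLp.ext h0)
  refine ⟨u' a / u a, PiLp.ext fun b => ?_⟩
  have hab : u a * v b = u' a * v' b := congrArg (· (a, b)) h
  simp only [PiLp.smul_apply, smul_eq_mul]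
  field_simp
  linear_combination hab

theorem phaseEq_tens_iff [Fintype ι] [Fintype κ]
    {u u' : EuclideanSpace ℂ ι} {v v' : EuclideanSpace ℂ κ}
    (hu : ‖u‖ = 1) (hu' : ‖u'‖ = 1) (hv : ‖v‖ = 1) (hv' : ‖v'‖ = 1) :
    PhaseEq (tens u v) (tens u' v') ↔ PhaseEq u u' ∧ PhaseEq v v' := by
  refine ⟨fun h => ?_, fun h => phaseEq_tens h.1 h.2⟩
  have hu₀ : u ≠ 0 := ne_zero_of_norm_ne_zero (hu ▸ one_ne_zero)
  have hv₀ : v ≠ 0 := ne_zero_of_norm_ne_zero (hv ▸ one_ne_zero)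
  have hu₀' : u' ≠ 0 := ne_zero_of_norm_ne_zero (hu' ▸ one_ne_zero)
  have hv₀' : v' ≠ 0 := ne_zero_of_norm_ne_zero (hv' ▸ one_ne_zero)
  obtain ⟨θ, h⟩ := h
  obtain ⟨a, ha⟩ := exists_eq_smul_left_of_tens_eq (h.trans (tens_smul_left _ u' v').symm) hv₀
  obtain ⟨b, hb⟩ := exists_eq_smul_right_of_tens_eq (h.trans (tens_smul_right _ u' v').symm) hu₀
  rw [smul_smul] at ha hb
  exact ⟨phaseEq_of_eq_smul_of_norm_eq (hu.trans hu'.symm) hu₀' ha,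
    phaseEq_of_eq_smul_of_norm_eq (hv.trans hv'.symm) hv₀' hb⟩

end Tens

section FamCardEq

variable {α β : Type*}

theorem FamCardEq.comp_surjective {E : Type*} [AddCommGroup E] [Module ℂ E] {f : β → E} {c : ℕ}
    (hf : FamCardEq f c) {σ : α → β} (hσ : Function.Surjective σ) : FamCardEq (f ∘ σ) c := by
  obtain ⟨reps, hcover, hhit, hdistinct⟩ := hf
  refine ⟨reps, fun a => hcover (σ a), fun k => ?_, hdistinct⟩
  obtain ⟨b, hb⟩ := hhit k
  obtain ⟨a, rfl⟩ := hσ b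
  exact ⟨a, hb⟩

theorem FamCardEq.norm_reps_eq_one {E : Type*} [NormedAddCommGroup E] [NormedSpace ℂ E]
    {f : α → E} {c : ℕ} {reps : Fin c → E} (hf : ∀ a, ‖f a‖ = 1)
    (hhit : ∀ k, ∃ a, PhaseEq (f a) (reps k)) (k : Fin c) : ‖reps k‖ = 1 := by
  obtain ⟨a, ha⟩ := hhit k
  rw [← ha.norm_eq, hf a]

theorem famCardEq_tens {ι κ : Type*} [Fintype ι] [Fintype κ]
    {f : α → EuclideanSpace ℂ ι} {g : β → EuclideanSpace ℂ κ} {c₁ c₂ : ℕ}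
    (hf₁ : ∀ a, ‖f a‖ = 1) (hg₁ : ∀ b, ‖g b‖ = 1)
    (hf : FamCardEq f c₁) (hg : FamCardEq g c₂) :
    FamCardEq (fun p : α × β => tens (f p.1) (g p.2)) (c₁ * c₂) := by
  obtain ⟨r, hr_cover, hr_hit, hr_distinct⟩ := hf
  obtain ⟨s, hs_cover, hs_hit, hs_distinct⟩ := hg
  have hr₁ := FamCardEq.norm_reps_eq_one hf₁ hr_hit
  have hs₁ := FamCardEq.norm_reps_eq_one hg₁ hs_hit
  let e := (finProdFinEquiv (m := c₁) (n := c₂)).symm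
  refine ⟨fun k => tens (r (e k).1) (s (e k).2), fun p => ?_, fun k => ?_, fun k l hkl hkl' => ?_⟩
  · obtain ⟨k₁, hk₁⟩ := hr_cover p.1
    obtain ⟨k₂, hk₂⟩ := hs_cover p.2
    exact ⟨e.symm (k₁, k₂), by simpa only [Equiv.apply_symm_apply] using phaseEq_tens hk₁ hk₂⟩
  · obtain ⟨a, ha⟩ := hr_hit (e k).1
    obtain ⟨b, hb⟩ := hs_hit (e k).2
    exact ⟨(a, b), phaseEq_tens ha hb⟩
  · obtain ⟨h₁, h₂⟩ := (phaseEq_tens_iff (hr₁ _) (hr₁ _) (hs₁ _) (hs₁ _)).mp hkl'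
    exact hkl (e.injective (Prod.ext (not_not.mp fun h => hr_distinct _ _ h h₁)
      (not_not.mp fun h => hs_distinct _ _ h h₂)))

end FamCardEq

theorem surjective_product_construction_index {m n : ℕ} :
    Function.Surjective fun q : (Fin m × Fin n) × (Fin n × Fin m) =>
      ((q.1.1, q.2.1 + q.1.2), (q.2.1, q.1.1 + q.2.2)) := by
  rintro ⟨⟨i, a⟩, ⟨j, b⟩⟩
  have : NeZero m := ⟨i.pos.ne'⟩
  have : NeZero n := ⟨j.pos.ne'⟩
  exact ⟨((i, a - j), (j, b - i)), by simp⟩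

/-- Product construction and cardinality: if `U` has cardinality `c₁` and `V`
has cardinality `c₂`, then the QLS(mn) `W` with entries
`w_{i,j;k,l} = u_{i,j+k} ⊗ v_{j,i+l}` has cardinality `c₁ · c₂`. -/
theorem product_construction_card (m n : ℕ)
    (U : Fin m → Fin n → EuclideanSpace ℂ (Fin n))
    (V : Fin n → Fin m → EuclideanSpace ℂ (Fin m))
    (hU : ∀ i, Orthonormal ℂ (fun j => U i j))
    (hV : ∀ j, Orthonormal ℂ (fun l => V j l))
    (c₁ c₂ : ℕ)
    (hc₁ : FamCardEq (fun p : Fin m × Fin n => U p.1 p.2) c₁)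
    (hc₂ : FamCardEq (fun p : Fin n × Fin m => V p.1 p.2) c₂) :
    FamCardEq
      (fun q : (Fin m × Fin n) × (Fin n × Fin m) =>
        tens (U q.1.1 (q.2.1 + q.1.2)) (V q.2.1 (q.1.1 + q.2.2)))
      (c₁ * c₂) :=
  (famCardEq_tens (fun p : Fin m × Fin n => (hU p.1).1 p.2)
    (fun p : Fin n × Fin m => (hV p.1).1 p.2) hc₁ hc₂).comp_surjective
    surjective_product_construction_index
end
end

section
/- For distinct natural numbers k and t, the 32 entries of the two quantum Latin squares W_{2k−1,2k} and W_{2t−1,2t} are pairwise distinct up to global phase; in particular, there exist infinitely many QLS(4)s with maximal cardinality 16 in ℋ_2⊗ℋ_2 whose element sets are pairwise disjoint. -/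
noncomputable section

/-- `|0⟩, |1⟩` in `ℋ₂`. -/
def e2 : Fin 2 → EuclideanSpace ℂ (Fin 2) := fun i => EuclideanSpace.single i 1

/-- The 2×2 row-quantum Latin rectangle `V_{a,b}`. -/
def Vab (a b : ℝ) : Fin 2 → Fin 2 → EuclideanSpace ℂ (Fin 2) := fun i j =>
  (fun t : ℝ =>
    ((Real.sqrt (1 + t ^ 2) : ℝ)⁻¹ : ℂ) •
      (if j = 0 then e2 0 + (t : ℂ) • e2 1 else (-(t : ℂ)) • e2 0 + e2 1))
  (if i = 0 then a else b)

/-- The QLS(4) `W_{a,b}` obtained from the product construction applied to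
`V_{0,1}` and `V_{a,b}`. -/
def Wab (a b : ℝ) : (Fin 2 × Fin 2) → (Fin 2 × Fin 2) → EuclideanSpace ℂ (Fin 2 × Fin 2) :=
  fun r c => tens (Vab 0 1 r.1 (c.1 + r.2)) (Vab a b c.1 (r.1 + c.2))

/-!
A product `u ⊗ v` of unit vectors determines the projectors `|u⟩⟨u|` and `|v⟩⟨v|` as the
partial traces of `|u ⊗ v⟩⟨u ⊗ v|`, and projectors do not see a global phase. The real unit
vectors `(1, t)/√(1+t²)` and `(-t, 1)/√(1+t²)` with `t ≥ 0` all have different projectors.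
Hence an entry of `W_{a,b}` (with `a, b ≥ 0`) determines the row of `V_{0,1}` it comes from,
the column indices of both tensor factors, and the parameter `a` or `b` of its `V_{a,b}`
factor. For `a ≠ b` this recovers the position of the entry; and for `k ≠ t` the parameter
sets `{2k-1, 2k}` and `{2t-1, 2t}` are disjoint, which separates the entries of the two squares.
-/

open scoped InnerProductSpace ComplexConjugate Kronecker

namespace Matrix

variable {R m n : Type*} [CommSemiring R]

theorem kronecker_left_eq_of_trace_eq_one [Fintype n] {A A' : Matrix m m R} {B B' : Matrix n n R}
    (h : A ⊗ₖ B = A' ⊗ₖ B') (hB : B.trace = 1) (hB' : B'.trace = 1) : A = A' := by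
  have partialTrace (X : Matrix m m R) (Y : Matrix n n R) (i j : m) :
      ∑ k, (X ⊗ₖ Y) (i, k) (j, k) = X i j * Y.trace := by
    simp only [kronecker_apply, trace, diag, Finset.mul_sum]
  ext i j
  simpa [hB, hB'] using (partialTrace A B i j).symm.trans
    ((congrArg (fun M => ∑ k, M (i, k) (j, k)) h).trans (partialTrace A' B' i j))

theorem kronecker_right_eq_of_trace_eq_one [Fintype m] {A A' : Matrix m m R} {B B' : Matrix n n R}
    (h : A ⊗ₖ B = A' ⊗ₖ B') (hA : A.trace = 1) (hA' : A'.trace = 1) : B = B' := by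
  have partialTrace (X : Matrix m m R) (Y : Matrix n n R) (k l : n) :
      ∑ i, (X ⊗ₖ Y) (i, k) (i, l) = X.trace * Y k l := by
    simp only [kronecker_apply, trace, diag, Finset.sum_mul]
  ext k l
  simpa [hA, hA'] using (partialTrace A B k l).symm.trans
    ((congrArg (fun M => ∑ i, M (i, k) (i, l)) h).trans (partialTrace A' B' k l))

end Matrix

section Tensor

variable {ι κ : Type*}

theorem inner_tens [Fintype ι] [Fintype κ] (u u' : EuclideanSpace ℂ ι)
    (v v' : EuclideanSpace ℂ κ) : ⟪tens u v, tens u' v'⟫_ℂ = ⟪u, u'⟫_ℂ * ⟪v, v'⟫_ℂ := by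
  simp only [PiLp.inner_apply, RCLike.inner_apply, tens, WithLp.equiv_symm_apply,
    Fintype.sum_prod_type, map_mul, Finset.sum_mul_sum]
  exact Finset.sum_congr rfl fun i _ => Finset.sum_congr rfl fun j _ => by ring

def densityMatrix (w : EuclideanSpace ℂ ι) : Matrix ι ι ℂ :=
  Matrix.vecMulVec w (star ⇑w)

theorem densityMatrix_apply (w : EuclideanSpace ℂ ι) (p q : ι) :
    densityMatrix w p q = w p * conj (w q) :=
  rfl

theorem PhaseEq.densityMatrix_eq {u v : EuclideanSpace ℂ ι} (h : PhaseEq u v) :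
    densityMatrix u = densityMatrix v := by
  obtain ⟨θ, rfl⟩ := h
  have hunit : Complex.exp (θ * Complex.I) * conj (Complex.exp (θ * Complex.I)) = 1 := by
    rw [Complex.mul_conj, Complex.normSq_eq_norm_sq, Complex.norm_exp_ofReal_mul_I]
    simp
  ext p q
  simp only [densityMatrix_apply, PiLp.smul_apply, smul_eq_mul, map_mul]
  linear_combination (v p * conj (v q)) * hunit

theorem densityMatrix_tens (u : EuclideanSpace ℂ ι) (v : EuclideanSpace ℂ κ) :
    densityMatrix (tens u v) = densityMatrix u ⊗ₖ densityMatrix v := by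
  ext ⟨i, k⟩ ⟨j, l⟩
  simp only [densityMatrix_apply, Matrix.kronecker_apply, tens, WithLp.equiv_symm_apply,
    map_mul]
  ring

theorem trace_densityMatrix [Fintype ι] {w : EuclideanSpace ℂ ι} (hw : ‖w‖ = 1) :
    (densityMatrix w).trace = 1 := by
  have : (densityMatrix w).trace = ⟪w, w⟫_ℂ := by
    simp only [Matrix.trace, Matrix.diag, densityMatrix_apply, PiLp.inner_apply,
      RCLike.inner_apply]
  rw [this, inner_self_eq_norm_sq_to_K, hw]
  simp

theorem densityMatrix_eq_of_phaseEq_tens [Fintype ι] [Fintype κ]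
    {u u' : EuclideanSpace ℂ ι} {v v' : EuclideanSpace ℂ κ} (hu : ‖u‖ = 1) (hu' : ‖u'‖ = 1)
    (hv : ‖v‖ = 1) (hv' : ‖v'‖ = 1) (h : PhaseEq (tens u v) (tens u' v')) :
    densityMatrix u = densityMatrix u' ∧ densityMatrix v = densityMatrix v' := by
  have hρ := h.densityMatrix_eq
  rw [densityMatrix_tens, densityMatrix_tens] at hρ
  exact ⟨Matrix.kronecker_left_eq_of_trace_eq_one hρ (trace_densityMatrix hv)
      (trace_densityMatrix hv'),
    Matrix.kronecker_right_eq_of_trace_eq_one hρ (trace_densityMatrix hu)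
      (trace_densityMatrix hu')⟩

end Tensor

section Qubit

def row (t : ℝ) (j : Fin 2) : EuclideanSpace ℂ (Fin 2) :=
  ((Real.sqrt (1 + t ^ 2) : ℝ)⁻¹ : ℂ) •
    (if j = 0 then e2 0 + (t : ℂ) • e2 1 else (-(t : ℂ)) • e2 0 + e2 1)

theorem Vab_eq_row (a b : ℝ) (i : Fin 2) : Vab a b i = row (if i = 0 then a else b) :=
  rfl

theorem row_apply (t : ℝ) (j p : Fin 2) :
    row t j p = ((Real.sqrt (1 + t ^ 2))⁻¹ *
      (if j = 0 then (if p = 0 then 1 else t) else (if p = 0 then -t else 1)) : ℝ) := by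
  fin_cases j <;> fin_cases p <;> simp [row, e2]

theorem orthonormal_row (t : ℝ) : Orthonormal ℂ (row t) := by
  have hs := Real.mul_self_sqrt (by positivity : (0 : ℝ) ≤ 1 + t ^ 2)
  rw [orthonormal_iff_ite]
  intro j j'
  fin_cases j <;> fin_cases j' <;>
    simp [PiLp.inner_apply, Fin.sum_univ_two, row_apply, -inner_self_eq_norm_sq_to_K] <;>
    norm_cast <;> field_simp <;> nlinarith [hs]

theorem densityMatrix_row (t : ℝ) (j : Fin 2) :
    densityMatrix (row t j) 0 0 = ((if j = 0 then 1 else t ^ 2) / (1 + t ^ 2) : ℝ) ∧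
    densityMatrix (row t j) 0 1 = ((if j = 0 then t else -t) / (1 + t ^ 2) : ℝ) := by
  have hs := Real.sq_sqrt (by positivity : (0 : ℝ) ≤ 1 + t ^ 2)
  simp only [densityMatrix_apply, row_apply, Complex.conj_ofReal]
  fin_cases j <;> constructor <;> norm_cast <;> simp <;> field_simp <;> simp [hs]

theorem eq_of_densityMatrix_row_eq {t t' : ℝ} {j j' : Fin 2} (ht : 0 ≤ t) (ht' : 0 ≤ t')
    (h : densityMatrix (row t j) = densityMatrix (row t' j')) : t = t' ∧ j = j' := by
  obtain ⟨h00, h01⟩ := densityMatrix_row t j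
  obtain ⟨h00', h01'⟩ := densityMatrix_row t' j'
  have e00 := h00.symm.trans ((congrFun (congrFun h 0) 0).trans h00')
  have e01 := h01.symm.trans ((congrFun (congrFun h 0) 1).trans h01')
  norm_cast at e00 e01
  have p : 0 < 1 + t ^ 2 := by positivity
  have p' : 0 < 1 + t' ^ 2 := by positivity
  fin_cases j <;> fin_cases j' <;> simp at e00 e01 ⊢ <;> field_simp at e00 e01 <;>
    nlinarith [mul_nonneg ht ht']

end Qubit

section ProductConstruction

variable {G ι κ : Type*} [AddGroup G] [Fintype ι] [Fintype κ]

def productArray (U : G → G → EuclideanSpace ℂ ι) (V : G → G → EuclideanSpace ℂ κ) :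
    G × G → G × G → EuclideanSpace ℂ (ι × κ) :=
  fun r c => tens (U r.1 (c.1 + r.2)) (V c.1 (r.1 + c.2))

theorem isQLSIdx_productArray [DecidableEq G] {U : G → G → EuclideanSpace ℂ ι}
    {V : G → G → EuclideanSpace ℂ κ} (hU : ∀ i, Orthonormal ℂ (U i))
    (hV : ∀ i, Orthonormal ℂ (V i)) : IsQLSIdx (productArray U V) := by
  constructor
  · intro r
    rw [orthonormal_iff_ite]
    rintro ⟨c₁, c₂⟩ ⟨c₁', c₂'⟩
    simp only [productArray]
    rw [inner_tens, orthonormal_iff_ite.mp (hU r.1)]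
    by_cases hc : c₁ = c₁'
    · subst hc
      simp [orthonormal_iff_ite.mp (hV c₁)]
    · simp [hc]
  · intro c
    rw [orthonormal_iff_ite]
    rintro ⟨r₁, r₂⟩ ⟨r₁', r₂'⟩
    simp only [productArray]
    rw [inner_tens]
    by_cases hr : r₁ = r₁'
    · subst hr
      simp [orthonormal_iff_ite.mp (hU r₁), (hV c.1).1]
    · simp [orthonormal_iff_ite.mp (hV c.1), hr]

end ProductConstruction

theorem famCardEq_of_pairwise {ι E : Type*} [Fintype ι] [AddCommGroup E] [Module ℂ E]
    {f : ι → E} (hf : Pairwise fun i j => ¬ PhaseEq (f i) (f j)) :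
    FamCardEq f (Fintype.card ι) := by
  let e := Fintype.equivFin ι
  have hrefl (u : E) : PhaseEq u u := ⟨0, by simp⟩
  refine ⟨f ∘ e.symm, fun i => ⟨e i, by simpa using hrefl (f i)⟩, fun k => ⟨e.symm k, hrefl _⟩,
    fun k l hkl => hf (e.symm.injective.ne hkl)⟩

section Wab

theorem Wab_eq_productArray (a b : ℝ) : Wab a b = productArray (Vab 0 1) (Vab a b) :=
  rfl

theorem isQLSIdx_Wab (a b : ℝ) : IsQLSIdx (Wab a b) := by
  rw [Wab_eq_productArray]
  exact isQLSIdx_productArray (fun i => Vab_eq_row 0 1 i ▸ orthonormal_row _)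
    (fun i => Vab_eq_row a b i ▸ orthonormal_row _)

theorem eq_of_ite_eq_ite {α : Type*} {a b : α} (hab : a ≠ b) {i i' : Fin 2}
    (h : (if i = 0 then a else b) = (if i' = 0 then a else b)) : i = i' := by
  fin_cases i <;> fin_cases i' <;> simp_all [eq_comm]

theorem eq_of_phaseEq_Wab {a b a' b' : ℝ} (ha : 0 ≤ a) (hb : 0 ≤ b) (ha' : 0 ≤ a') (hb' : 0 ≤ b')
    {r c r' c' : Fin 2 × Fin 2} (h : PhaseEq (Wab a b r c) (Wab a' b' r' c')) :
    r.1 = r'.1 ∧ c.1 + r.2 = c'.1 + r'.2 ∧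
      (if c.1 = 0 then a else b) = (if c'.1 = 0 then a' else b') ∧ r.1 + c.2 = r'.1 + c'.2 := by
  have hnorm (t : ℝ) (j : Fin 2) : ‖row t j‖ = 1 := (orthonormal_row t).1 j
  obtain ⟨hU, hV⟩ := densityMatrix_eq_of_phaseEq_tens (hnorm _ _) (hnorm _ _) (hnorm _ _)
    (hnorm _ _) h
  have nonneg {x y : ℝ} (hx : 0 ≤ x) (hy : 0 ≤ y) (i : Fin 2) :
      0 ≤ if i = 0 then x else y := by
    split_ifs <;> assumption
  obtain ⟨hs, hj⟩ := eq_of_densityMatrix_row_eq (nonneg le_rfl zero_le_one _)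
    (nonneg le_rfl zero_le_one _) hU
  obtain ⟨ht, hl⟩ := eq_of_densityMatrix_row_eq (nonneg ha hb _) (nonneg ha' hb' _) hV
  exact ⟨eq_of_ite_eq_ite zero_ne_one hs, hj, ht, hl⟩

theorem Wab_pairwise_not_phaseEq {a b : ℝ} (ha : 0 ≤ a) (hb : 0 ≤ b) (hab : a ≠ b) :
    Pairwise fun q q' : (Fin 2 × Fin 2) × (Fin 2 × Fin 2) =>
      ¬ PhaseEq (Wab a b q.1 q.2) (Wab a b q'.1 q'.2) := by
  rintro ⟨⟨r₁, r₂⟩, c₁, c₂⟩ ⟨⟨r₁', r₂'⟩, c₁', c₂'⟩ hne h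
  obtain ⟨hr₁, hcr, ht, hrc⟩ := eq_of_phaseEq_Wab ha hb ha hb h
  obtain rfl := eq_of_ite_eq_ite hab ht
  obtain rfl := hr₁
  obtain rfl := add_left_cancel hcr
  obtain rfl := add_left_cancel hrc
  exact hne rfl

theorem Wab_not_phaseEq_of_ne {a b a' b' : ℝ} (ha : 0 ≤ a) (hb : 0 ≤ b) (ha' : 0 ≤ a')
    (hb' : 0 ≤ b') (hne : ∀ i i' : Fin 2, (if i = 0 then a else b) ≠ (if i' = 0 then a' else b'))
    (r c r' c' : Fin 2 × Fin 2) : ¬ PhaseEq (Wab a b r c) (Wab a' b' r' c') :=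
  fun h => hne _ _ (eq_of_phaseEq_Wab ha hb ha' hb' h).2.2.1

end Wab

/-- For every positive natural `k`, `W_{2k-1,2k}` is a QLS(4) with maximal
cardinality 16 in `ℋ₂ ⊗ ℋ₂`, and for distinct positive naturals `k ≠ t` all
32 entries of `W_{2k-1,2k}` and `W_{2t-1,2t}` are pairwise distinct up to
global phase. -/
theorem Wab_family_distinct :
    (∀ k : ℕ, 1 ≤ k →
      IsQLSIdx (Wab ((2 * k - 1 : ℕ) : ℝ) ((2 * k : ℕ) : ℝ)) ∧
      FamCardEq
        (fun q : (Fin 2 × Fin 2) × (Fin 2 × Fin 2) =>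
          Wab ((2 * k - 1 : ℕ) : ℝ) ((2 * k : ℕ) : ℝ) q.1 q.2) 16) ∧
    (∀ k t : ℕ, 1 ≤ k → 1 ≤ t → k ≠ t →
      ∀ r c r' c' : Fin 2 × Fin 2,
        ¬ PhaseEq (Wab ((2 * k - 1 : ℕ) : ℝ) ((2 * k : ℕ) : ℝ) r c)
          (Wab ((2 * t - 1 : ℕ) : ℝ) ((2 * t : ℕ) : ℝ) r' c')) := by
  refine ⟨fun k hk => ⟨isQLSIdx_Wab _ _, ?_⟩, fun k t hk ht hkt => ?_⟩
  · have hab : ((2 * k - 1 : ℕ) : ℝ) ≠ ((2 * k : ℕ) : ℝ) := by exact_mod_cast (by omega)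
    exact famCardEq_of_pairwise
      (Wab_pairwise_not_phaseEq (Nat.cast_nonneg _) (Nat.cast_nonneg _) hab)
  · refine Wab_not_phaseEq_of_ne (Nat.cast_nonneg _) (Nat.cast_nonneg _) (Nat.cast_nonneg _)
      (Nat.cast_nonneg _) fun i i' => ?_
    fin_cases i <;> fin_cases i' <;> simp <;> norm_cast <;> omega
end
end
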